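/- Define Γ_r(λ) = -(m_r c²)/(4πe²) - (2/3)⟨(-Δ+λ)^{-1}ρ_r, ρ_r⟩ with the renormalized mass m_r = m - (8πe²/(3c²))E(ρ_r). Then for every λ > 0, Γ_r(λ) → Γ_m(λ) = -(mc²)/(4πe²) + √λ/(6π) as r → 0. -/

import Mathlib

open MeasureTheory Real Filter

noncomputable abbrev E3 := EuclideanSpace ℝ (Fin 3)

/-- Yukawa potential `G_λ`. -/
noncomputable def G (lam : ℝ) (x : E3) : ℝ :=
  Real.exp (-Real.sqrt lam * ‖x‖) / (4 * π * ‖x‖)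

/-- Coulomb energy of a density on ℝ³. -/
noncomputable def coulombEnergy (ρ : E3 → ℝ) : ℝ :=
  (1 / (4 * π)) * ∫ x : E3, ∫ y : E3, ρ x * ρ y / ‖x - y‖

/-- Scaled density `ρ_r(x) = r⁻³ ρ(x/r)`. -/
noncomputable def scaled (ρ : E3 → ℝ) (r : ℝ) (x : E3) : ℝ :=
  r ^ (-3 : ℤ) * ρ (r⁻¹ • x)

/-- `⟨(-Δ+λ)⁻¹ ρ_r, ρ_r⟩` expressed via the Yukawa kernel. -/
noncomputable def yukawaPairing (ρ : E3 → ℝ) (lam r : ℝ) : ℝ :=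
  ∫ x : E3, ∫ y : E3, scaled ρ r x * G lam (x - y) * scaled ρ r y

/-- Renormalized mass `m_r = m - (8πe²/(3c²)) E(ρ_r)`. -/
noncomputable def m_r (ρ : E3 → ℝ) (m c e r : ℝ) : ℝ :=
  m - (8 * π * e ^ 2 / (3 * c ^ 2)) * coulombEnergy (scaled ρ r)

/-- `Γ_r(λ) = -(m_r c²)/(4πe²) - (2/3)⟨(-Δ+λ)⁻¹ρ_r, ρ_r⟩`. -/
noncomputable def Gamma_r (ρ : E3 → ℝ) (m c e lam r : ℝ) : ℝ :=
  -(m_r ρ m c e r * c ^ 2) / (4 * π * e ^ 2) - (2 / 3) * yukawaPairing ρ lam r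

/-- `Γ_m(λ) = -(mc²)/(4πe²) + √λ/(6π)`. -/
noncomputable def Gamma_m (m c e lam : ℝ) : ℝ :=
  -(m * c ^ 2) / (4 * π * e ^ 2) + Real.sqrt lam / (6 * π)

/-!
Substituting `x = r u` turns the Coulomb energy of `ρ_r` and the Yukawa pairing into `r⁻¹` times
integrals against the fixed kernel `ρ(u) ρ(v) / |u - v|`. The mass renormalization cancels the
Coulomb part exactly, leaving `(6π)⁻¹ ∫ ρ(u) ρ(v) (1 - e^{-√λ r |u-v|}) / (r |u - v|)`. Since
`1 - e^{-t} ≤ t`, this integrand is dominated by `√λ ρ(u) ρ(v)`, and off the (null) diagonal it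
tends to `√λ ρ(u) ρ(v)`; dominated convergence gives the limit `√λ / (6π)`.
-/

open scoped Topology

theorem MeasureTheory.Measure.ae_prod_fst_ne_snd {α : Type*} [MeasurableSpace α] [MeasurableEq α]
    (μ ν : Measure α) [SFinite ν] [NullSingletonClass ν] : ∀ᵐ p ∂μ.prod ν, p.1 ≠ p.2 := by
  have hslice : ∀ x : α, Prod.mk x ⁻¹' Set.diagonal α = {x} := fun x => by ext y; simp [eq_comm]
  simp only [ae_iff, not_not]
  exact (Measure.measure_prod_null measurableSet_diagonal).2
    (ae_of_all _ fun x => by simp [hslice])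

lemma Real.abs_one_sub_exp_neg_le {x : ℝ} (hx : 0 ≤ x) : |1 - exp (-x)| ≤ x := by
  have hle : exp (-x) ≤ 1 := exp_le_one_iff.2 (neg_nonpos.2 hx)
  rw [abs_of_nonneg (sub_nonneg.2 hle)]
  linarith [add_one_le_exp (-x)]

lemma Real.tendsto_one_sub_exp_neg_mul_div (a : ℝ) :
    Tendsto (fun r => (1 - exp (-(a * r))) / r) (𝓝[≠] 0) (𝓝 a) := by
  have hderiv : HasDerivAt (fun r => 1 - exp (-(a * r))) a 0 := by
    simpa using ((hasDerivAt_id (0 : ℝ)).const_mul a).neg.exp.const_sub 1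
  refine (hasDerivAt_iff_tendsto_slope.1 hderiv).congr fun r => ?_
  simp [slope_def_field]

lemma abs_div_mul_one_sub_exp_neg_div_le {a d r s : ℝ} (hd : 0 ≤ d) (hr : 0 < r) (hs : 0 ≤ s) :
    |a / d * ((1 - exp (-(s * (r * d)))) / r)| ≤ |a| * s := by
  rcases hd.eq_or_lt with rfl | hd
  · simpa using mul_nonneg (abs_nonneg a) hs
  calc |a / d * ((1 - exp (-(s * (r * d)))) / r)|
      = |a| / d * (|1 - exp (-(s * (r * d)))| / r) := by
        rw [abs_mul, abs_div, abs_div, abs_of_pos hd, abs_of_pos hr]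
    _ ≤ |a| / d * (s * (r * d) / r) := by
        gcongr; exact Real.abs_one_sub_exp_neg_le (by positivity)
    _ = |a| * s := by field_simp

section Scaling

variable {ρ : E3 → ℝ} {r : ℝ}

lemma scaled_smul (hr : r ≠ 0) (u : E3) : scaled ρ r (r • u) = (r ^ 3)⁻¹ * ρ u := by
  rw [scaled, smul_smul, inv_mul_cancel₀ hr, one_smul, zpow_neg, zpow_ofNat]

lemma integral_scaled_mul (hr : 0 < r) (g : E3 → ℝ) :
    ∫ x, scaled ρ r x * g x = ∫ u, ρ u * g (r • u) := by
  have hscale := Measure.integral_comp_smul volume (fun x => scaled ρ r x * g x) r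
  simp only [finrank_euclideanSpace_fin, scaled_smul hr.ne', mul_assoc, integral_const_mul,
    smul_eq_mul, abs_of_pos (inv_pos.2 (pow_pos hr 3))] at hscale
  exact (mul_left_cancel₀ (by positivity) hscale).symm

lemma integral_integral_scaled (hr : 0 < r) (W : E3 → ℝ) :
    ∫ x, ∫ y, scaled ρ r x * scaled ρ r y * W (x - y)
      = ∫ x, ∫ y, ρ x * ρ y * W (r • (x - y)) := by
  simp only [mul_assoc, integral_const_mul]
  rw [integral_congr_ae (ae_of_all _ fun x => congrArg (scaled ρ r x * ·)
    (integral_scaled_mul hr fun y => W (x - y))), integral_scaled_mul hr]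
  simp only [smul_sub]

end Scaling

noncomputable def coulombKernel (ρ : E3 → ℝ) (p : E3 × E3) : ℝ :=
  ρ p.1 * ρ p.2 / ‖p.1 - p.2‖

section CoulombKernel

variable {ρ : E3 → ℝ}

lemma integrable_coulombKernel_mul (hfin : Integrable (coulombKernel ρ)) {φ : ℝ → ℝ}
    (hφ : Continuous φ) {C : ℝ} (hC : ∀ t, 0 ≤ t → |φ t| ≤ C) :
    Integrable fun p => coulombKernel ρ p * φ ‖p.1 - p.2‖ :=
  hfin.mul_bdd (by fun_prop : Continuous fun p : E3 × E3 => φ ‖p.1 - p.2‖).aestronglyMeasurable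
    (ae_of_all _ fun p => hC _ (norm_nonneg _))

lemma integral_integral_scaled_radial (hfin : Integrable (coulombKernel ρ)) {r : ℝ} (hr : 0 < r)
    {φ : ℝ → ℝ} (hφ : Continuous φ) {C : ℝ} (hC : ∀ t, 0 ≤ t → |φ t| ≤ C) :
    ∫ x, ∫ y, scaled ρ r x * scaled ρ r y * (φ ‖x - y‖ / ‖x - y‖)
      = r⁻¹ * ∫ p, coulombKernel ρ p * φ (r * ‖p.1 - p.2‖) := by
  have hint : Integrable fun p => coulombKernel ρ p * φ (r * ‖p.1 - p.2‖) :=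
    integrable_coulombKernel_mul hfin (hφ.comp (continuous_const_mul r))
      fun t ht => hC _ (by positivity)
  rw [Measure.volume_eq_prod] at hint
  rw [integral_integral_scaled hr fun z => φ ‖z‖ / ‖z‖, Measure.volume_eq_prod,
    integral_prod _ hint, ← integral_const_mul]
  congr 1 with x
  rw [← integral_const_mul]
  congr 1 with y
  simp only [coulombKernel, norm_smul, norm_of_nonneg hr.le]
  field_simp

lemma coulombEnergy_scaled (hfin : Integrable (coulombKernel ρ)) {r : ℝ} (hr : 0 < r) :
    coulombEnergy (scaled ρ r) = (4 * π * r)⁻¹ * ∫ p, coulombKernel ρ p := by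
  have h := integral_integral_scaled_radial hfin hr (φ := fun _ => 1) continuous_const (C := 1)
    fun _ _ => by norm_num
  simp only [mul_one, mul_one_div] at h
  rw [coulombEnergy, h]
  ring

lemma yukawaPairing_eq (hfin : Integrable (coulombKernel ρ)) (lam : ℝ) {r : ℝ} (hr : 0 < r) :
    yukawaPairing ρ lam r
      = (4 * π * r)⁻¹ * ∫ p, coulombKernel ρ p * exp (-(√lam * (r * ‖p.1 - p.2‖))) := by
  have h := integral_integral_scaled_radial hfin hr
    (φ := fun t => exp (-(√lam * t)) / (4 * π)) (by fun_prop) (C := (4 * π)⁻¹) fun t ht => by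
      rw [abs_of_nonneg (by positivity), div_eq_mul_inv]
      exact mul_le_of_le_one_left (by positivity)
        (exp_le_one_iff.2 (neg_nonpos.2 (by positivity)))
  have hG : ∀ x y : E3, scaled ρ r x * G lam (x - y) * scaled ρ r y
      = scaled ρ r x * scaled ρ r y * (exp (-(√lam * ‖x - y‖)) / (4 * π) / ‖x - y‖) := by
    intro x y; rw [G, neg_mul]; ring
  simp only [yukawaPairing, hG]
  rw [h]
  simp only [mul_div_assoc', integral_div]
  ring

lemma Gamma_r_eq {m c e : ℝ} (hc : c ≠ 0) (he : e ≠ 0) (hfin : Integrable (coulombKernel ρ))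
    (lam : ℝ) {r : ℝ} (hr : 0 < r) :
    Gamma_r ρ m c e lam r = -(m * c ^ 2) / (4 * π * e ^ 2)
      + (6 * π)⁻¹ * ∫ p, coulombKernel ρ p * ((1 - exp (-(√lam * (r * ‖p.1 - p.2‖)))) / r) := by
  have hexp : Integrable fun p => coulombKernel ρ p * exp (-(√lam * (r * ‖p.1 - p.2‖))) :=
    integrable_coulombKernel_mul hfin (φ := fun t => exp (-(√lam * (r * t)))) (by fun_prop)
      (C := 1) fun t ht => by
        rw [abs_of_pos (exp_pos _)]
        exact exp_le_one_iff.2 (neg_nonpos.2 (by positivity))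
  have hsub : ∫ p, coulombKernel ρ p * ((1 - exp (-(√lam * (r * ‖p.1 - p.2‖)))) / r)
      = r⁻¹ * ((∫ p, coulombKernel ρ p)
          - ∫ p, coulombKernel ρ p * exp (-(√lam * (r * ‖p.1 - p.2‖)))) := by
    rw [← integral_sub hfin hexp, ← integral_const_mul]
    congr 1 with p
    ring
  rw [Gamma_r, m_r, coulombEnergy_scaled hfin hr, yukawaPairing_eq hfin lam hr, hsub]
  field_simp
  ring

end CoulombKernel

lemma tendsto_integral_coulombKernel_mul_one_sub_exp {ρ : E3 → ℝ} (hρ : Integrable ρ)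
    (hfin : Integrable (coulombKernel ρ)) {s : ℝ} (hs : 0 ≤ s) :
    Tendsto (fun r => ∫ p, coulombKernel ρ p * ((1 - exp (-(s * (r * ‖p.1 - p.2‖)))) / r))
      (𝓝[>] 0) (𝓝 (s * (∫ x, ρ x) ^ 2)) := by
  have hρρ : Integrable fun p : E3 × E3 => ρ p.1 * ρ p.2 := by
    rw [Measure.volume_eq_prod]; exact hρ.mul_prod hρ
  have hlimit : ∫ p, coulombKernel ρ p * (s * ‖p.1 - p.2‖) = s * (∫ x, ρ x) ^ 2 := by
    have hoff : ∀ᵐ p : E3 × E3, coulombKernel ρ p * (s * ‖p.1 - p.2‖) = s * (ρ p.1 * ρ p.2) := by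
      rw [Measure.volume_eq_prod]
      filter_upwards [Measure.ae_prod_fst_ne_snd volume volume] with p hp
      have hd : ‖p.1 - p.2‖ ≠ 0 := norm_ne_zero_iff.2 (sub_ne_zero.2 hp)
      rw [coulombKernel]; field_simp
    rw [integral_congr_ae hoff, integral_const_mul, Measure.volume_eq_prod, integral_prod_mul, sq]
  rw [← hlimit]
  refine tendsto_integral_filter_of_dominated_convergence (fun p => |ρ p.1 * ρ p.2| * s)
    (Eventually.of_forall fun r => hfin.aestronglyMeasurable.mul
      (by fun_prop : Continuous fun p : E3 × E3 =>
        (1 - exp (-(s * (r * ‖p.1 - p.2‖)))) / r).aestronglyMeasurable) ?_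
    (hρρ.abs.mul_const s) (ae_of_all _ fun p => ?_)
  · filter_upwards [self_mem_nhdsWithin] with r hr
    exact ae_of_all _ fun p => abs_div_mul_one_sub_exp_neg_div_le (norm_nonneg _) hr hs
  · have h := (Real.tendsto_one_sub_exp_neg_mul_div (s * ‖p.1 - p.2‖)).mono_left
      (nhdsWithin_mono 0 fun r (hr : 0 < r) => hr.ne')
    refine Tendsto.const_mul _ (h.congr fun r => ?_)
    ring_nf

theorem stmt_6_general (ρ : E3 → ℝ) (m c e lam : ℝ)
    (hc : 0 < c) (he : 0 < e)
    (hprob : ∫ x : E3, ρ x = 1)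
    (hfin : Integrable (fun p : E3 × E3 => ρ p.1 * ρ p.2 / ‖p.1 - p.2‖)) :
    Tendsto (fun r => Gamma_r ρ m c e lam r) (nhdsWithin 0 (Set.Ioi 0))
      (nhds (Gamma_m m c e lam)) := by
  have hρ : Integrable ρ := .of_integral_ne_zero (by rw [hprob]; exact one_ne_zero)
  have hlim := tendsto_integral_coulombKernel_mul_one_sub_exp hρ hfin (sqrt_nonneg lam)
  rw [hprob, one_pow, mul_one] at hlim
  rw [Gamma_m, div_eq_inv_mul (√lam)]
  refine (tendsto_const_nhds.add (hlim.const_mul _)).congr' ?_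
  filter_upwards [self_mem_nhdsWithin] with r hr
  exact (Gamma_r_eq hc.ne' he.ne' hfin lam hr).symm

theorem stmt_6 (ρ : E3 → ℝ) (m c e lam : ℝ)
    (hm : 0 < m) (hc : 0 < c) (he : 0 < e) (hlam : 0 < lam)
    (hmeas : Measurable ρ) (hpos : ∀ x, 0 ≤ ρ x)
    (hprob : ∫ x : E3, ρ x = 1)
    (hsymm : ∀ x y : E3, ‖x‖ = ‖y‖ → ρ x = ρ y)
    (hsupp : HasCompactSupport ρ)
    (hfin : Integrable (fun p : E3 × E3 => ρ p.1 * ρ p.2 / ‖p.1 - p.2‖)) :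
    Tendsto (fun r => Gamma_r ρ m c e lam r) (nhdsWithin 0 (Set.Ioi 0))
      (nhds (Gamma_m m c e lam)) :=
  stmt_6_general ρ m c e lam hc he hprob hfin
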